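/- arXiv:1403.6783 — 2 statements merged into one kernel-verified Lean document; each statement's English description precedes it below -/
import Mathlib

section
/- Let f : V → ℝ be smooth on an open set V ⊆ ℝ², let a ≠ 0, b, λ ≠ 0 be real constants, and let U : ℝ → ℝ be smooth with U'(u) ≠ 0 for all u. Define T(y,u) = (a·y + b, U(u)) and f̃ = λ·(f ∘ T) on T⁻¹(V). Then for every smooth function g : V → ℝ and every point (y,u) ∈ T⁻¹(V) with f(T(y,u)) ≠ 0 and f_u(T(y,u)) ≠ 0, one has (f̃/f̃_u)·∂_u(g ∘ T) = ((f/f_u)·∂_u g) ∘ T at (y,u); i.e. the derivation ∇₂ = (f/f_u)·∂/∂u is equivariant under the substitution T. -/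
/-- Partial derivative in the first variable. -/
noncomputable def pd1 (f : ℝ → ℝ → ℝ) : ℝ → ℝ → ℝ := fun y u => deriv (fun s => f s u) y

/-- Partial derivative in the second variable. -/
noncomputable def pd2 (f : ℝ → ℝ → ℝ) : ℝ → ℝ → ℝ := fun y u => deriv (f y) u

/-- Second-order differential invariant `J21 = f·f_yy / f_y²`. -/
noncomputable def J21 (f : ℝ → ℝ → ℝ) : ℝ → ℝ → ℝ := fun y u =>
  f y u * pd1 (pd1 f) y u / (pd1 f y u) ^ 2

/-- Second-order differential invariant `J22 = f·f_yu / (f_y·f_u)`. -/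
noncomputable def J22 (f : ℝ → ℝ → ℝ) : ℝ → ℝ → ℝ := fun y u =>
  f y u * pd2 (pd1 f) y u / (pd1 f y u * pd2 f y u)

/-- Third-order differential invariant `J31 = f²·f_yyy / f_y³`. -/
noncomputable def J31 (f : ℝ → ℝ → ℝ) : ℝ → ℝ → ℝ := fun y u =>
  f y u ^ 2 * pd1 (pd1 (pd1 f)) y u / (pd1 f y u) ^ 3

/-- Third-order differential invariant `J32 = f²·f_yyu / (f_y²·f_u)`. -/
noncomputable def J32 (f : ℝ → ℝ → ℝ) : ℝ → ℝ → ℝ := fun y u =>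
  f y u ^ 2 * pd2 (pd1 (pd1 f)) y u / ((pd1 f y u) ^ 2 * pd2 f y u)

/-- Third-order differential invariant `J33 = f²·f_yuu/(f_u²·f_y) − J22·f·f_uu/f_u²`. -/
noncomputable def J33 (f : ℝ → ℝ → ℝ) : ℝ → ℝ → ℝ := fun y u =>
  f y u ^ 2 * pd2 (pd2 (pd1 f)) y u / ((pd2 f y u) ^ 2 * pd1 f y u)
    - J22 f y u * (f y u * pd2 (pd2 f) y u / (pd2 f y u) ^ 2)

/-- Fourth-order differential invariant `J41 = f³·f_yyyy / f_y⁴`. -/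
noncomputable def J41 (f : ℝ → ℝ → ℝ) : ℝ → ℝ → ℝ := fun y u =>
  f y u ^ 3 * pd1 (pd1 (pd1 (pd1 f))) y u / (pd1 f y u) ^ 4

/-- Fourth-order differential invariant
`J44 = f³·f_yuuu/(f_y·f_u³) − 3·J33·f·f_uu/f_u² − J22·f²·f_uuu/f_u³`. -/
noncomputable def J44 (f : ℝ → ℝ → ℝ) : ℝ → ℝ → ℝ := fun y u =>
  f y u ^ 3 * pd2 (pd2 (pd2 (pd1 f))) y u / (pd1 f y u * (pd2 f y u) ^ 3)
    - 3 * J33 f y u * (f y u * pd2 (pd2 f) y u / (pd2 f y u) ^ 2)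
    - J22 f y u * (f y u ^ 2 * pd2 (pd2 (pd2 f)) y u / (pd2 f y u) ^ 3)

/-- The invariant derivation `∇₁ = (f/f_y)·∂/∂y` applied to `g`. -/
noncomputable def nab1 (f g : ℝ → ℝ → ℝ) : ℝ → ℝ → ℝ := fun y u =>
  f y u / pd1 f y u * pd1 g y u

/-- The invariant derivation `∇₂ = (f/f_u)·∂/∂u` applied to `g`. -/
noncomputable def nab2 (f g : ℝ → ℝ → ℝ) : ℝ → ℝ → ℝ := fun y u =>
  f y u / pd2 f y u * pd2 g y u

/-! Both sides are `(f / f_u) · g_u` at `T(y,u)`: the factor `λ` cancels between `f̃` and `f̃_u`,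
and by the chain rule `∂_u` of a function composed with `T` picks up the same factor `U'(u)` in
`f̃_u` and in `∂_u(g ∘ T)`. The affine part of `T` only moves the first variable, which `∂_u`
holds fixed. -/

theorem ContDiffOn.differentiableAt_right {F : ℝ → ℝ → ℝ} {V : Set (ℝ × ℝ)} {n : WithTop ℕ∞}
    (hV : IsOpen V) (hF : ContDiffOn ℝ n (fun p : ℝ × ℝ => F p.1 p.2) V) (hn : n ≠ 0)
    {x v : ℝ} (hmem : (x, v) ∈ V) : DifferentiableAt ℝ (F x) v :=
  ((hF.contDiffAt (hV.mem_nhds hmem)).differentiableAt hn).comp v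
    ((differentiableAt_const x).prodMk differentiableAt_id)

theorem pd2_const_mul (l : ℝ) (F : ℝ → ℝ → ℝ) (y u : ℝ) :
    pd2 (fun s v => l * F s v) y u = l * pd2 F y u :=
  deriv_const_mul_field l

theorem pd2_comp {F : ℝ → ℝ → ℝ} (φ U : ℝ → ℝ) {y u : ℝ}
    (hF : DifferentiableAt ℝ (F (φ y)) (U u)) (hU : DifferentiableAt ℝ U u) :
    pd2 (fun s v => F (φ s) (U v)) y u = pd2 F (φ y) (U u) * deriv U u :=
  deriv_comp u hF hU

theorem nab2_const_mul {l : ℝ} (hl : l ≠ 0) (F G : ℝ → ℝ → ℝ) (y u : ℝ) :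
    nab2 (fun s v => l * F s v) G y u = nab2 F G y u := by
  simp only [nab2, pd2_const_mul, mul_div_mul_left _ _ hl]

theorem nab2_comp {F G : ℝ → ℝ → ℝ} (φ U : ℝ → ℝ) {y u : ℝ}
    (hF : DifferentiableAt ℝ (F (φ y)) (U u)) (hG : DifferentiableAt ℝ (G (φ y)) (U u))
    (hU : DifferentiableAt ℝ U u) (hU' : deriv U u ≠ 0) :
    nab2 (fun s v => F (φ s) (U v)) (fun s v => G (φ s) (U v)) y u
      = nab2 F G (φ y) (U u) := by
  simp only [nab2, pd2_comp φ U hF hU, pd2_comp φ U hG hU]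
  field_simp

theorem nabla2_equivariant_general (V : Set (ℝ × ℝ)) (hV : IsOpen V) (f : ℝ → ℝ → ℝ)
    (hf : ContDiffOn ℝ (⊤ : ℕ∞) (fun p : ℝ × ℝ => f p.1 p.2) V)
    (a b l : ℝ) (hl : l ≠ 0)
    (U : ℝ → ℝ) (hU : ContDiff ℝ (⊤ : ℕ∞) U) (hU' : ∀ v : ℝ, deriv U v ≠ 0)
    (g : ℝ → ℝ → ℝ) (hg : ContDiffOn ℝ (⊤ : ℕ∞) (fun p : ℝ × ℝ => g p.1 p.2) V)
    (y u : ℝ) (hmem : (a * y + b, U u) ∈ V) :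
    nab2 (fun s v => l * f (a * s + b) (U v)) (fun s v => g (a * s + b) (U v)) y u
      = nab2 f g (a * y + b) (U u) := by
  rw [nab2_const_mul hl]
  exact nab2_comp (fun s => a * s + b) U (hf.differentiableAt_right hV (by simp) hmem)
    (hg.differentiableAt_right hV (by simp) hmem) (hU.differentiable (by simp) u) (hU' u)

/-- Equivariance of the invariant derivation `∇₂ = (f/f_u)·∂/∂u` under the feedback
substitution `T(y,u) = (a·y + b, U(u))`, `f̃ = λ·(f ∘ T)`, where `U' ≠ 0` everywhere:
for every smooth `g` and every point of `T⁻¹(V)` with `f(T(y,u)) ≠ 0` and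
`f_u(T(y,u)) ≠ 0`, `(f̃/f̃_u)·∂_u(g ∘ T) = ((f/f_u)·∂_u g) ∘ T`. -/
theorem nabla2_equivariant (V : Set (ℝ × ℝ)) (hV : IsOpen V) (f : ℝ → ℝ → ℝ)
    (hf : ContDiffOn ℝ (⊤ : ℕ∞) (fun p : ℝ × ℝ => f p.1 p.2) V)
    (a b l : ℝ) (ha : a ≠ 0) (hl : l ≠ 0)
    (U : ℝ → ℝ) (hU : ContDiff ℝ (⊤ : ℕ∞) U) (hU' : ∀ v : ℝ, deriv U v ≠ 0)
    (g : ℝ → ℝ → ℝ) (hg : ContDiffOn ℝ (⊤ : ℕ∞) (fun p : ℝ × ℝ => g p.1 p.2) V)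
    (y u : ℝ) (hmem : (a * y + b, U u) ∈ V)
    (hf0 : f (a * y + b) (U u) ≠ 0) (hfu : pd2 f (a * y + b) (U u) ≠ 0) :
    nab2 (fun s v => l * f (a * s + b) (U v)) (fun s v => g (a * s + b) (U v)) y u
      = nab2 f g (a * y + b) (U u) :=
  nabla2_equivariant_general V hV f hf a b l hl U hU hU' g hg y u hmem
end

section
/- Let f : V → ℝ be smooth on an open set V ⊆ ℝ² with f, f_y and f_u nowhere zero on V. Then, on V, (f/f_u)·∂_u(f·f_{yu}/(f_y·f_u)) = J22 − J22² + J33, where J22 = f·f_{yu}/(f_y·f_u) and J33 = f²·f_{yuu}/(f_u²·f_y) − J22·f·f_{uu}/f_u²; i.e. ∇₂(J22) = J22 − J22² + J33. -/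
/-! The identity is the quotient rule for `∂_u` applied to `J22 = f·f_yu/(f_y·f_u)`, followed by
rational-function algebra. The only analytic input is that on an open set the partials `pd1 f`,
`pd2 f` of a `C^{n+1}` function are `C^n`, being components of its Fréchet derivative, so that
`f`, `f_y`, `f_u`, `f_yu` have genuine `u`-derivatives rather than junk values of `deriv`. -/

open Function

section PartialDerivatives

variable {f : ℝ → ℝ → ℝ} {V : Set (ℝ × ℝ)} {y u : ℝ}

lemma pd1_eq_fderiv_apply (hf : DifferentiableAt ℝ (uncurry f) (y, u)) :
    pd1 f y u = fderiv ℝ (uncurry f) (y, u) (1, 0) := by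
  have h : HasDerivAt (uncurry f ∘ fun s => (s, u)) (fderiv ℝ (uncurry f) (y, u) (1, 0)) y :=
    hf.hasFDerivAt.comp_hasDerivAt y ((hasDerivAt_id' y).prodMk (hasDerivAt_const y u))
  exact h.deriv

lemma hasDerivAt_snd_fderiv_apply (hf : DifferentiableAt ℝ (uncurry f) (y, u)) :
    HasDerivAt (f y) (fderiv ℝ (uncurry f) (y, u) (0, 1)) u :=
  hf.hasFDerivAt.comp_hasDerivAt u ((hasDerivAt_const u y).prodMk (hasDerivAt_id u))

lemma hasDerivAt_pd2 (hf : DifferentiableAt ℝ (uncurry f) (y, u)) :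
    HasDerivAt (f y) (pd2 f y u) u :=
  (hasDerivAt_snd_fderiv_apply hf).differentiableAt.hasDerivAt

lemma pd2_eq_fderiv_apply (hf : DifferentiableAt ℝ (uncurry f) (y, u)) :
    pd2 f y u = fderiv ℝ (uncurry f) (y, u) (0, 1) :=
  (hasDerivAt_snd_fderiv_apply hf).deriv

variable {m n : WithTop ℕ∞}

lemma ContDiffOn.uncurry_pd1 (hf : ContDiffOn ℝ n (uncurry f) V) (hV : IsOpen V)
    (hmn : m + 1 ≤ n) : ContDiffOn ℝ m (uncurry (pd1 f)) V := by
  refine ((hf.fderiv_of_isOpen hV hmn).clm_apply (contDiffOn_const (c := (1, 0)))).congr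
    fun p hp => ?_
  have hdiff := (hf.of_le (le_add_self.trans hmn)).differentiableOn one_ne_zero
  exact pd1_eq_fderiv_apply ((hdiff p hp).differentiableAt (hV.mem_nhds hp))

lemma ContDiffOn.uncurry_pd2 (hf : ContDiffOn ℝ n (uncurry f) V) (hV : IsOpen V)
    (hmn : m + 1 ≤ n) : ContDiffOn ℝ m (uncurry (pd2 f)) V := by
  refine ((hf.fderiv_of_isOpen hV hmn).clm_apply (contDiffOn_const (c := (0, 1)))).congr
    fun p hp => ?_
  have hdiff := (hf.of_le (le_add_self.trans hmn)).differentiableOn one_ne_zero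
  exact pd2_eq_fderiv_apply ((hdiff p hp).differentiableAt (hV.mem_nhds hp))

end PartialDerivatives

lemma pd2_J22 {V : Set (ℝ × ℝ)} (hV : IsOpen V) {f : ℝ → ℝ → ℝ}
    (hf : ContDiffOn ℝ 3 (uncurry f) V) {y u : ℝ} (hyu : (y, u) ∈ V)
    (hfy : pd1 f y u ≠ 0) (hfu : pd2 f y u ≠ 0) :
    pd2 (J22 f) y u =
      ((pd2 f y u * pd2 (pd1 f) y u + f y u * pd2 (pd2 (pd1 f)) y u) * (pd1 f y u * pd2 f y u)
        - f y u * pd2 (pd1 f) y u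
          * (pd2 (pd1 f) y u * pd2 f y u + pd1 f y u * pd2 (pd2 f) y u))
        / (pd1 f y u * pd2 f y u) ^ 2 := by
  have hderiv {g : ℝ → ℝ → ℝ} (hg : ContDiffOn ℝ 1 (uncurry g) V) :
      HasDerivAt (g y) (pd2 g y u) u :=
    hasDerivAt_pd2 ((hg.differentiableOn one_ne_zero).differentiableAt (hV.mem_nhds hyu))
  have hfy1 : ContDiffOn ℝ 2 (uncurry (pd1 f)) V := hf.uncurry_pd1 hV (by norm_num)
  exact ((hderiv (hf.of_le (by norm_num))).mul
      (hderiv (hfy1.uncurry_pd2 hV (by norm_num)))).div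
    ((hderiv (hfy1.of_le (by norm_num))).mul
      (hderiv (hf.uncurry_pd2 hV (by norm_num)))) (mul_ne_zero hfy hfu) |>.deriv

theorem nabla2_J22_general (V : Set (ℝ × ℝ)) (hV : IsOpen V) (f : ℝ → ℝ → ℝ)
    (hf : ContDiffOn ℝ (⊤ : ℕ∞) (fun p : ℝ × ℝ => f p.1 p.2) V)
    (hfy : ∀ y u : ℝ, (y, u) ∈ V → pd1 f y u ≠ 0)
    (hfu : ∀ y u : ℝ, (y, u) ∈ V → pd2 f y u ≠ 0) :
    ∀ y u : ℝ, (y, u) ∈ V →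
      nab2 f (J22 f) y u = J22 f y u - (J22 f y u) ^ 2 + J33 f y u := by
  intro y u hyu
  have hfy := hfy y u hyu
  have hfu := hfu y u hyu
  rw [nab2, pd2_J22 hV (hf.of_le (WithTop.coe_le_coe.2 le_top)) hyu hfy hfu, J33, J22]
  field_simp
  ring

/-- The syzygy `∇₂(J22) = J22 − J22² + J33` on an open set where `f`, `f_y` and `f_u`
are nowhere zero. -/
theorem nabla2_J22 (V : Set (ℝ × ℝ)) (hV : IsOpen V) (f : ℝ → ℝ → ℝ)
    (hf : ContDiffOn ℝ (⊤ : ℕ∞) (fun p : ℝ × ℝ => f p.1 p.2) V)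
    (hf0 : ∀ y u : ℝ, (y, u) ∈ V → f y u ≠ 0)
    (hfy : ∀ y u : ℝ, (y, u) ∈ V → pd1 f y u ≠ 0)
    (hfu : ∀ y u : ℝ, (y, u) ∈ V → pd2 f y u ≠ 0) :
    ∀ y u : ℝ, (y, u) ∈ V →
      nab2 f (J22 f) y u = J22 f y u - (J22 f y u) ^ 2 + J33 f y u :=
  nabla2_J22_general V hV f hf hfy hfu
end
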